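/- arXiv:1909.03145 — 2 statements merged into one kernel-verified Lean document; each statement's English description precedes it below -/
import Mathlib

section
/- Let V be a real Hilbert space, 0 ≤ μ ≤ L, and let f ∈ S^{1,1}_{μ,L} with global minimizer x*. Let γ_0 > 0, and for each k ≥ 0 let α_k > 0 satisfy L·α_k² = γ_k(1 + α_k), and let (x_k, y_k, v_k, γ_k) satisfy: γ_{k+1} = γ_k + α_k(μ − γ_{k+1}), (y_k − x_k)/α_k = v_k − y_k, (v_{k+1} − v_k)/α_k = (μ/γ_k)(y_k − v_{k+1}) − (1/γ_k)∇f(y_k), and x_{k+1} = y_k − (1/L)∇f(y_k). Then for every k ≥ 0, 𝓛_{k+1} ≤ 𝓛_k/(1 + α_k). -/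
/-! The update of `v` is an implicit step; pairing it with `v_{k+1} - x*` (a three-point identity)
gives `(γ_k + α_k μ)/2 ‖v_{k+1} - x*‖² - γ_k/2 ‖v_k - x*‖²
  ≤ α_k μ/2 ‖y_k - x*‖² - α_k ⟪∇f(y_k), v_{k+1} - x*⟫ - γ_k/2 ‖v_{k+1} - v_k‖²`.
Split the inner product at `v_k` and `y_k`: strong convexity at `x*` absorbs the `‖y_k - x*‖²`
term, convexity at `x_k` (where `x_k - y_k = -α_k (v_k - y_k)`) handles `⟪∇f(y_k), v_k - y_k⟫`,
and Young's inequality bounds the piece along `v_{k+1} - v_k` by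
`α_k² ‖∇f(y_k)‖² / (2γ_k) = (1 + α_k) ‖∇f(y_k)‖² / (2L)`, which is `1 + α_k` times the decrease
of `f` guaranteed by the gradient step from `y_k` to `x_{k+1}`. Finally
`γ_{k+1} (1 + α_k) = γ_k + α_k μ`. -/

open RealInnerProductSpace

section

open Set

variable {V : Type*} [NormedAddCommGroup V] [InnerProductSpace ℝ V]

theorem image_le_add_inner_add_of_lipschitz_gradient [CompleteSpace V] {L : ℝ} {f : V → ℝ}
    {f' : V → V} (hdiff : ∀ z, HasGradientAt f (f' z) z)
    (hlip : ∀ z w, ‖f' z - f' w‖ ≤ L * ‖z - w‖) (z w : V) :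
    f z ≤ f w + ⟪f' w, z - w⟫ + L / 2 * ‖z - w‖ ^ 2 := by
  set d := z - w
  set φ : ℝ → ℝ := fun t => t * ⟪f' w, d⟫ + L / 2 * t ^ 2 * ‖d‖ ^ 2 - f (w + t • d)
  have hderiv : ∀ t : ℝ, HasDerivAt φ (⟪f' w, d⟫ + L * t * ‖d‖ ^ 2 - ⟪f' (w + t • d), d⟫) t := by
    intro t
    have hline : HasDerivAt (fun t : ℝ => w + t • d) d t := by
      simpa using ((hasDerivAt_id t).smul_const d).const_add w
    have hf : HasDerivAt (fun t => f (w + t • d)) ⟪f' (w + t • d), d⟫ t := by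
      have h := (hasGradientAt_iff_hasFDerivAt.mp (hdiff _)).comp_hasDerivAt t hline
      simp only [InnerProductSpace.toDual_apply_apply] at h
      exact h
    have hq : HasDerivAt (fun t => t * ⟪f' w, d⟫ + L / 2 * t ^ 2 * ‖d‖ ^ 2)
        (⟪f' w, d⟫ + L * t * ‖d‖ ^ 2) t := by
      refine (((hasDerivAt_id t).mul_const ⟪f' w, d⟫).add
        (((hasDerivAt_pow 2 t).const_mul (L / 2)).mul_const (‖d‖ ^ 2))).congr_deriv ?_
      push_cast
      ring
    exact hq.sub hf
  have hmono : MonotoneOn φ (Ici 0) := by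
    refine monotoneOn_of_hasDerivWithinAt_nonneg (convex_Ici 0)
      (fun t _ => (hderiv t).continuousAt.continuousWithinAt)
      (fun t _ => (hderiv t).hasDerivWithinAt) fun t ht => ?_
    rw [interior_Ici, mem_Ioi] at ht
    have hcs : ⟪f' (w + t • d) - f' w, d⟫ ≤ L * t * ‖d‖ ^ 2 :=
      calc ⟪f' (w + t • d) - f' w, d⟫ ≤ ‖f' (w + t • d) - f' w‖ * ‖d‖ := real_inner_le_norm _ _
        _ ≤ L * ‖t • d‖ * ‖d‖ := by
          gcongr
          simpa using hlip (w + t • d) w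
        _ = L * t * ‖d‖ ^ 2 := by rw [norm_smul, Real.norm_of_nonneg ht.le]; ring
    rw [inner_sub_left] at hcs
    linarith
  have h01 := hmono self_mem_Ici (mem_Ici.mpr zero_le_one) zero_le_one
  simp [φ, d] at h01
  linarith

theorem image_sub_one_div_smul_gradient_le [CompleteSpace V] {L : ℝ} {f : V → ℝ}
    {f' : V → V} (hdiff : ∀ z, HasGradientAt f (f' z) z)
    (hlip : ∀ z w, ‖f' z - f' w‖ ≤ L * ‖z - w‖) (w : V) :
    f (w - (1 / L) • f' w) ≤ f w - ‖f' w‖ ^ 2 / (2 * L) := by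
  have h := image_le_add_inner_add_of_lipschitz_gradient hdiff hlip (w - (1 / L) • f' w) w
  rw [sub_sub_cancel_left, inner_neg_right, real_inner_smul_right, real_inner_self_eq_norm_sq,
    norm_neg, norm_smul, Real.norm_eq_abs, mul_pow, sq_abs] at h
  rcases eq_or_ne L 0 with rfl | hL
  · simp
  · convert h using 1
    field_simp
    ring

theorem norm_sub_sq_of_smul_sub_eq {G c : ℝ} {v v' y u : V}
    (hv : G • (v' - v) = c • (y - v') - u) (z : V) :
    (G + c) / 2 * ‖v' - z‖ ^ 2 = G / 2 * ‖v - z‖ ^ 2 + c / 2 * ‖y - z‖ ^ 2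
      - c / 2 * ‖v' - y‖ ^ 2 - G / 2 * ‖v' - v‖ ^ 2 - ⟪u, v' - z⟫ := by
  rw [← sub_sub_sub_cancel_right v' v z, ← sub_sub_sub_cancel_right y v' z] at hv
  rw [← sub_sub_sub_cancel_right v' v z, ← sub_sub_sub_cancel_right v' y z]
  generalize v' - z = A at hv ⊢
  generalize v - z = B at hv ⊢
  generalize y - z = C at hv ⊢
  have h := congrArg (fun t => ⟪t, A⟫) hv
  simp only [inner_sub_left, real_inner_smul_left, real_inner_self_eq_norm_sq] at h
  rw [norm_sub_sq_real, norm_sub_sq_real]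
  rw [real_inner_comm A B, real_inner_comm A C] at h
  linear_combination h

theorem neg_inner_sub_le_norm_sq_div {G : ℝ} (hG : 0 < G) (u d : V) :
    -⟪u, d⟫ - G / 2 * ‖d‖ ^ 2 ≤ ‖u‖ ^ 2 / (2 * G) := by
  have hcs : -⟪u, d⟫ ≤ ‖u‖ * ‖d‖ := by
    rw [← inner_neg_left]; exact (real_inner_le_norm _ _).trans (by rw [norm_neg])
  rw [le_div_iff₀ (by positivity)]
  nlinarith [sq_nonneg (‖u‖ - G * ‖d‖)]

theorem lyapunov_step_le [CompleteSpace V] {μ L : ℝ} (hμ : 0 ≤ μ) {f : V → ℝ} {f' : V → V}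
    (hdiff : ∀ z, HasGradientAt f (f' z) z)
    (hconv : ∀ z w : V, f z - f w - ⟪f' w, z - w⟫ ≥ μ / 2 * ‖z - w‖ ^ 2)
    (hlip : ∀ z w : V, ‖f' z - f' w‖ ≤ L * ‖z - w‖) (hL : 0 < L)
    {a γ γ' : ℝ} (ha : 0 < a) (hstep : L * a ^ 2 = γ * (1 + a)) (hγ : γ' = γ + a * (μ - γ'))
    {x y v v' : V} (hy : y - x = a • (v - y))
    (hv : γ • (v' - v) = a • (μ • (y - v') - f' y)) (xstar : V) :
    f (y - (1 / L) • f' y) - f xstar + γ' / 2 * ‖v' - xstar‖ ^ 2 ≤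
      (f x - f xstar + γ / 2 * ‖v - xstar‖ ^ 2) / (1 + a) := by
  set g := f' y
  have h1a : 0 < 1 + a := by linarith
  have hγpos : 0 < γ := pos_of_mul_pos_left (hstep ▸ by positivity) h1a.le
  have hdesc : f (y - (1 / L) • g) ≤ f y - ‖g‖ ^ 2 / (2 * L) :=
    image_sub_one_div_smul_gradient_le hdiff hlip y
  have hconv_x : f y + ⟪g, x - y⟫ ≤ f x := by
    linarith [hconv x y, mul_nonneg hμ (sq_nonneg ‖x - y‖)]
  have hconv_star : f y - ⟪g, y - xstar⟫ + μ / 2 * ‖y - xstar‖ ^ 2 ≤ f xstar := by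
    have h := hconv xstar y
    rw [← neg_sub y xstar, inner_neg_right, norm_neg] at h
    linarith
  have hvstep := norm_sub_sq_of_smul_sub_eq (c := a * μ) (u := a • g)
    (by rw [hv, smul_sub, smul_smul]) xstar
  have hyoung := neg_inner_sub_le_norm_sq_div hγpos (a • g) (v' - v)
  rw [real_inner_smul_left] at hyoung
  have hγ' : γ' * (1 + a) = γ + a * μ := by linarith
  have hsplit : ⟪a • g, v' - xstar⟫ = a * ⟪g, v' - v⟫ + a * ⟪g, v - y⟫ + a * ⟪g, y - xstar⟫ := by
    rw [show v' - xstar = (v' - v) + (v - y) + (y - xstar) by abel, real_inner_smul_left,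
      inner_add_right, inner_add_right]
    ring
  have hxy : ⟪g, x - y⟫ = -(a * ⟪g, v - y⟫) := by
    rw [← neg_sub y x, hy, inner_neg_right, real_inner_smul_right]
  have hstep_ratio : ‖a • g‖ ^ 2 / (2 * γ) = (1 + a) * (‖g‖ ^ 2 / (2 * L)) := by
    rw [norm_smul, Real.norm_of_nonneg ha.le]
    field_simp
    linear_combination ‖g‖ ^ 2 * hstep
  rw [le_div_iff₀ h1a]
  linear_combination (1 + a) * hdesc + hconv_x + a * hconv_star + hyoung + hvstep
    + ‖v' - xstar‖ ^ 2 / 2 * hγ' - hsplit - hxy + hstep_ratio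
    + mul_nonneg (mul_nonneg ha.le hμ) (sq_nonneg ‖v' - y‖) / 2

end

theorem stmt8_general {V : Type*} [NormedAddCommGroup V] [InnerProductSpace ℝ V] [CompleteSpace V]
    (μ L : ℝ) (hμ : 0 ≤ μ) (f : V → ℝ) (f' : V → V)
    (hdiff : ∀ z, HasGradientAt f (f' z) z)
    (hconv : ∀ z w : V, f z - f w - ⟪f' w, z - w⟫ ≥ μ / 2 * ‖z - w‖ ^ 2)
    (hlip : ∀ z w : V, ‖f' z - f' w‖ ≤ L * ‖z - w‖)
    (xstar : V)
    (γ α : ℕ → ℝ) (hγ0 : 0 < γ 0) (hα : ∀ k, 0 < α k)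
    (hstep : ∀ k, L * (α k) ^ 2 = γ k * (1 + α k))
    (x y v : ℕ → V)
    (hγrec : ∀ k, γ (k + 1) = γ k + α k * (μ - γ (k + 1)))
    (hyrec : ∀ k, y k - x k = α k • (v k - y k))
    (hvrec : ∀ k, γ k • (v (k + 1) - v k) = α k • (μ • (y k - v (k + 1)) - f' (y k)))
    (hxrec : ∀ k, x (k + 1) = y k - (1 / L) • f' (y k)) :
    ∀ k : ℕ,
      f (x (k + 1)) - f xstar + γ (k + 1) / 2 * ‖v (k + 1) - xstar‖ ^ 2 ≤
        (f (x k) - f xstar + γ k / 2 * ‖v k - xstar‖ ^ 2) / (1 + α k) := by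
  have hL : 0 < L := pos_of_mul_pos_left ((hstep 0).symm ▸ mul_pos hγ0 (by linarith [hα 0]))
    (sq_nonneg _)
  intro k
  rw [hxrec k]
  exact lyapunov_step_le hμ hdiff hconv hlip hL (hα k) (hstep k) (hγrec k) (hyrec k) (hvrec k) xstar

theorem stmt8 {V : Type*} [NormedAddCommGroup V] [InnerProductSpace ℝ V] [CompleteSpace V]
    (μ L : ℝ) (hμ : 0 ≤ μ) (hμL : μ ≤ L) (f : V → ℝ) (f' : V → V)
    (hdiff : ∀ z, HasGradientAt f (f' z) z)
    (hconv : ∀ z w : V, f z - f w - ⟪f' w, z - w⟫ ≥ μ / 2 * ‖z - w‖ ^ 2)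
    (hlip : ∀ z w : V, ‖f' z - f' w‖ ≤ L * ‖z - w‖)
    (xstar : V) (hmin : ∀ z, f xstar ≤ f z)
    (γ α : ℕ → ℝ) (hγ0 : 0 < γ 0) (hα : ∀ k, 0 < α k)
    (hstep : ∀ k, L * (α k) ^ 2 = γ k * (1 + α k))
    (x y v : ℕ → V)
    (hγrec : ∀ k, γ (k + 1) = γ k + α k * (μ - γ (k + 1)))
    (hyrec : ∀ k, y k - x k = α k • (v k - y k))
    (hvrec : ∀ k, γ k • (v (k + 1) - v k) = α k • (μ • (y k - v (k + 1)) - f' (y k)))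
    (hxrec : ∀ k, x (k + 1) = y k - (1 / L) • f' (y k)) :
    ∀ k : ℕ,
      f (x (k + 1)) - f xstar + γ (k + 1) / 2 * ‖v (k + 1) - xstar‖ ^ 2 ≤
        (f (x k) - f xstar + γ k / 2 * ‖v k - xstar‖ ^ 2) / (1 + α k) :=
  stmt8_general μ L hμ f f' hdiff hconv hlip xstar γ α hγ0 hα hstep x y v hγrec hyrec hvrec hxrec
end

section
/- Let V be a real Hilbert space, 0 ≤ μ ≤ L with L > 0, and let f ∈ S^{1,1}_{μ,L} with global minimizer x*. Let γ_0 > 0, and for each k ≥ 0 let α_k > 0 satisfy L·α_k² = γ_k(1 + α_k), and let (x_k, y_k, v_k, γ_k) satisfy: γ_{k+1} = γ_k + α_k(μ − γ_{k+1}), (y_k − x_k)/α_k = v_k − y_k, (v_{k+1} − v_k)/α_k = (μ/γ_k)(y_k − v_{k+1}) − (1/γ_k)∇f(y_k), and x_{k+1} = y_k − (1/L)∇f(y_k). Then for all k ≥ 0: 𝓛_k ≤ 𝓛_0 · min{ 4L/(√γ_0·k + 2√L)², (1 + √(min{γ_0, μ}/L))^{−k} }. Moreover, if γ_0 ≥ L,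 then for all k ≥ 1: 𝓛_k ≤ (f(x_0) − f(x*) + (L/2)‖v_0 − x*‖²) · min{ 4/k², (1 + √(μ/L))^{1−k} }. -/
/-!
Each step contracts the Lyapunov function: `(1 + α_k) 𝓛_{k+1} ≤ 𝓛_k`. This combines the
sufficient decrease `f(x_{k+1}) ≤ f(y_k) - ‖∇f(y_k)‖² / (2L)` of the gradient step, strong
convexity at `(x*, y_k)`, convexity at `(x_k, y_k)`, and Young's inequality for the implicit
`v`-update, whose constant matches exactly because `L α_k² = γ_k (1 + α_k)`. Hence
`𝓛_k ≤ 𝓛_0 / Λ_k` with `Λ_k = ∏_{i<k} (1 + α_i)`.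

Since `γ_k ≥ min(γ_0, μ)` and `α_k ≥ √(γ_k / L)`, `Λ_k` grows geometrically. Since moreover
`γ_k Λ_k ≥ γ_0`, one gets `L (Λ_{k+1} - Λ_k)² ≥ γ_0 Λ_{k+1}`, so `√Λ_k` grows by at least
`√(γ_0 / L) / 2` per step. When `γ_0 ≥ L`, the first step already brings `γ_0 / Λ_1` below `L`.
-/

open RealInnerProductSpace Finset

theorem half_le_sub_of_sq_mul_sq_le {c p q : ℝ} (hc : 0 ≤ c) (hp : 0 < p) (hpq : p ≤ q)
    (h : c ^ 2 * q ^ 2 ≤ (q ^ 2 - p ^ 2) ^ 2) : c / 2 ≤ q - p := by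
  have hcq : c * q ≤ (q - p) * (q + p) := by
    rw [← pow_le_pow_iff_left₀ (mul_nonneg hc (by linarith)) (by nlinarith) two_ne_zero]
    linear_combination h
  nlinarith

theorem pow_le_prod_one_add {α : ℕ → ℝ} {ρ : ℝ} (hρ : 0 ≤ ρ) (h : ∀ i, ρ ≤ 1 + α i) (k : ℕ) :
    ρ ^ k ≤ ∏ i ∈ range k, (1 + α i) := by
  simpa using prod_le_prod (s := range k) (fun _ _ ↦ hρ) (fun i _ ↦ h i)

theorem sqrt_div_le_of_mul_sq_eq {L g a : ℝ} (hL : 0 < L) (ha : 0 ≤ a)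
    (h : L * a ^ 2 = g * (1 + a)) : √(g / L) ≤ a := by
  have hg : 0 ≤ g := nonneg_of_mul_nonneg_left (h ▸ by positivity : 0 ≤ g * (1 + a)) (by positivity)
  rw [Real.sqrt_le_iff, div_le_iff₀ hL]
  exact ⟨ha, by nlinarith⟩

theorem mul_prod_le_of_mul_succ_le {u r : ℕ → ℝ} (hr : ∀ k, 0 ≤ r k)
    (h : ∀ k, r k * u (k + 1) ≤ u k) (k : ℕ) : u k * ∏ i ∈ range k, r i ≤ u 0 := by
  induction k with
  | zero => simp
  | succ k ih =>
    rw [prod_range_succ]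
    nlinarith [mul_le_mul_of_nonneg_right (h k) (prod_nonneg (s := range k) fun i _ ↦ hr i)]

section Rates

variable {μ L : ℝ} {γ α : ℕ → ℝ}

theorem min_le_gamma (hα : ∀ k, 0 ≤ α k)
    (hγrec : ∀ k, γ (k + 1) = γ k + α k * (μ - γ (k + 1))) (k : ℕ) : min (γ 0) μ ≤ γ k := by
  induction k with
  | zero => exact min_le_left _ _
  | succ k ih => nlinarith [hγrec k, hα k, min_le_right (γ 0) μ]

theorem gamma_zero_le_mul_prod (hμ : 0 ≤ μ) (hα : ∀ k, 0 ≤ α k)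
    (hγrec : ∀ k, γ (k + 1) = γ k + α k * (μ - γ (k + 1))) (k : ℕ) :
    γ 0 ≤ γ k * ∏ i ∈ range k, (1 + α i) := by
  induction k with
  | zero => simp
  | succ k ih =>
    have hP : 0 ≤ ∏ i ∈ range k, (1 + α i) := prod_nonneg fun i _ ↦ by linarith [hα i]
    rw [prod_range_succ]
    nlinarith [hγrec k, mul_nonneg (mul_nonneg (hα k) hμ) hP]

theorem sq_le_four_mul_prod (hμ : 0 ≤ μ) (hL : 0 < L) (hγ0 : 0 ≤ γ 0) (hα : ∀ k, 0 ≤ α k)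
    (hstep : ∀ k, L * α k ^ 2 = γ k * (1 + α k))
    (hγrec : ∀ k, γ (k + 1) = γ k + α k * (μ - γ (k + 1))) (k : ℕ) :
    (√(γ 0) * k + 2 * √L) ^ 2 ≤ 4 * L * ∏ i ∈ range k, (1 + α i) := by
  set c := √(γ 0 / L)
  have hP : ∀ k, 0 < ∏ i ∈ range k, (1 + α i) := fun k ↦ prod_pos fun i _ ↦ by linarith [hα i]
  have hgrowth : ∀ k : ℕ, 1 + k * (c / 2) ≤ √(∏ i ∈ range k, (1 + α i)) := by
    intro k
    induction k with
    | zero => simp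
    | succ k ih =>
      have hcstep : c / 2 ≤ √(∏ i ∈ range (k + 1), (1 + α i)) - √(∏ i ∈ range k, (1 + α i)) := by
        apply half_le_sub_of_sq_mul_sq_le (Real.sqrt_nonneg _) (Real.sqrt_pos.2 (hP k))
        · exact Real.sqrt_le_sqrt (by rw [prod_range_succ]; nlinarith [hP k, hα k])
        rw [Real.sq_sqrt (hP _).le, Real.sq_sqrt (hP _).le, Real.sq_sqrt (by positivity),
          prod_range_succ]
        set P := ∏ i ∈ range k, (1 + α i)
        have h1α : 0 ≤ 1 + α k := by linarith [hα k]
        have hsq : (P * (1 + α k) - P) ^ 2 * L = γ k * P * (P * (1 + α k)) := by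
          linear_combination P ^ 2 * hstep k
        rw [div_mul_eq_mul_div, div_le_iff₀ hL, hsq]
        exact mul_le_mul_of_nonneg_right (gamma_zero_le_mul_prod hμ hα hγrec k)
          (mul_nonneg (hP k).le h1α)
      push_cast
      linarith
  have hc : √L * c = √(γ 0) := by rw [← Real.sqrt_mul hL.le, mul_div_cancel₀ _ hL.ne']
  calc (√(γ 0) * k + 2 * √L) ^ 2 = 4 * √L ^ 2 * (1 + k * (c / 2)) ^ 2 := by rw [← hc]; ring
    _ ≤ 4 * L * √(∏ i ∈ range k, (1 + α i)) ^ 2 := by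
      rw [Real.sq_sqrt hL.le]; gcongr; exact hgrowth k
    _ = 4 * L * ∏ i ∈ range k, (1 + α i) := by rw [Real.sq_sqrt (hP k).le]

theorem sqrt_min_div_le_alpha (hL : 0 < L) (hα : ∀ k, 0 ≤ α k)
    (hstep : ∀ k, L * α k ^ 2 = γ k * (1 + α k))
    (hγrec : ∀ k, γ (k + 1) = γ k + α k * (μ - γ (k + 1))) (k : ℕ) :
    √(min (γ 0) μ / L) ≤ α k :=
  (Real.sqrt_le_sqrt (div_le_div_of_nonneg_right (min_le_gamma hα hγrec k) hL.le)).trans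
    (sqrt_div_le_of_mul_sq_eq hL (hα k) (hstep k))

theorem inv_prod_le_min (hμ : 0 ≤ μ) (hL : 0 < L) (hγ0 : 0 ≤ γ 0) (hα : ∀ k, 0 ≤ α k)
    (hstep : ∀ k, L * α k ^ 2 = γ k * (1 + α k))
    (hγrec : ∀ k, γ (k + 1) = γ k + α k * (μ - γ (k + 1))) (k : ℕ) :
    (∏ i ∈ range k, (1 + α i))⁻¹ ≤
      min (4 * L / (√(γ 0) * k + 2 * √L) ^ 2) (((1 + √(min (γ 0) μ / L)) ^ k)⁻¹) := by
  have hP : 0 < ∏ i ∈ range k, (1 + α i) := prod_pos fun i _ ↦ by linarith [hα i]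
  refine le_min ?_ ?_
  · rw [← inv_div]
    exact inv_anti₀ (by positivity)
      ((div_le_iff₀ (by positivity)).2
        (by linarith [sq_le_four_mul_prod hμ hL hγ0 hα hstep hγrec k]))
  · exact inv_anti₀ (by positivity) (pow_le_prod_one_add (by positivity)
      (fun i ↦ by linarith [sqrt_min_div_le_alpha hL hα hstep hγrec i]) k)

theorem gamma_zero_mul_inv_prod_le_min (hμ : 0 ≤ μ) (hμL : μ ≤ L) (hL : 0 < L) (hγL : L ≤ γ 0)
    (hα : ∀ k, 0 ≤ α k) (hstep : ∀ k, L * α k ^ 2 = γ k * (1 + α k))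
    (hγrec : ∀ k, γ (k + 1) = γ k + α k * (μ - γ (k + 1))) {k : ℕ} (hk : 1 ≤ k) :
    γ 0 * (∏ i ∈ range k, (1 + α i))⁻¹ ≤
      L * min (4 / (k : ℝ) ^ 2) (((1 + √(μ / L)) ^ (k - 1))⁻¹) := by
  have hP : 0 < ∏ i ∈ range k, (1 + α i) := prod_pos fun i _ ↦ by linarith [hα i]
  rw [mul_min_of_nonneg _ _ hL.le]
  refine le_min ?_ ?_ <;> rw [← div_eq_mul_inv, div_le_iff₀ hP]
  · have hk0 : (0 : ℝ) < k := by exact_mod_cast hk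
    have hsq := sq_le_four_mul_prod hμ hL (hL.le.trans hγL) hα hstep hγrec k
    rw [mul_div_assoc', div_mul_eq_mul_div, le_div_iff₀ (by positivity)]
    calc γ 0 * k ^ 2 = (√(γ 0) * k) ^ 2 := by rw [mul_pow, Real.sq_sqrt (hL.le.trans hγL)]
      _ ≤ (√(γ 0) * k + 2 * √L) ^ 2 := by gcongr; exact le_add_of_nonneg_right (by positivity)
      _ ≤ L * 4 * ∏ i ∈ range k, (1 + α i) := by linarith
  · obtain ⟨j, rfl⟩ := Nat.exists_eq_add_of_le' hk
    rw [Nat.add_sub_cancel, prod_range_succ']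
    have hρ : (1 + √(μ / L)) ^ j ≤ ∏ i ∈ range j, (1 + α (i + 1)) := by
      refine pow_le_prod_one_add (by positivity : (0 : ℝ) ≤ 1 + √(μ / L)) (fun i ↦ ?_) j
      have := sqrt_min_div_le_alpha hL hα hstep hγrec (i + 1)
      rw [min_eq_right (hμL.trans hγL)] at this
      linarith
    have hρ0 : (0 : ℝ) < (1 + √(μ / L)) ^ j := by positivity
    calc γ 0 ≤ L * (1 + α 0) := by nlinarith [hstep 0, hα 0]
      _ = L * ((1 + √(μ / L)) ^ j)⁻¹ * ((1 + √(μ / L)) ^ j * (1 + α 0)) := by field_simp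
      _ ≤ L * ((1 + √(μ / L)) ^ j)⁻¹ * ((∏ i ∈ range j, (1 + α (i + 1))) * (1 + α 0)) := by
        gcongr
        linarith [hα 0]

end Rates

theorem le_add_inner_add_sq_of_lipschitz_gradient {V : Type*} [NormedAddCommGroup V]
    [InnerProductSpace ℝ V] [CompleteSpace V] {L : ℝ} {f : V → ℝ} {f' : V → V}
    (hdiff : ∀ z, HasGradientAt f (f' z) z) (hlip : ∀ z w : V, ‖f' z - f' w‖ ≤ L * ‖z - w‖)
    (z w : V) :
    f z ≤ f w + ⟪f' w, z - w⟫ + L / 2 * ‖z - w‖ ^ 2 := by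
  set d := z - w
  let φ : ℝ → ℝ := fun t ↦ f (w + t • d) - t * ⟪f' w, d⟫ - L / 2 * ‖d‖ ^ 2 * t ^ 2
  have hφ : ∀ t, HasDerivAt φ (⟪f' (w + t • d) - f' w, d⟫ - L * ‖d‖ ^ 2 * t) t := by
    intro t
    have hline : HasDerivAt (fun s : ℝ ↦ w + s • d) d t := by
      simpa using ((hasDerivAt_id t).smul_const d).const_add w
    have hf := (hdiff (w + t • d)).hasFDerivAt.comp_hasDerivAt t hline
    simp only [Function.comp_def, InnerProductSpace.toDual_apply_apply] at hf
    refine ((hf.sub ((hasDerivAt_id t).mul_const ⟪f' w, d⟫)).sub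
      ((hasDerivAt_pow 2 t).const_mul (L / 2 * ‖d‖ ^ 2))).congr_deriv ?_
    rw [inner_sub_left]
    simp
    ring
  have hanti : AntitoneOn φ (Set.Icc 0 1) := by
    refine antitoneOn_of_hasDerivWithinAt_nonpos (convex_Icc 0 1)
      (fun t _ ↦ (hφ t).continuousAt.continuousWithinAt) (fun t _ ↦ (hφ t).hasDerivWithinAt) ?_
    intro t ht
    rw [interior_Icc] at ht
    have hgrad : ‖f' (w + t • d) - f' w‖ ≤ L * (t * ‖d‖) := by
      simpa [norm_smul, abs_of_pos ht.1] using hlip (w + t • d) w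
    nlinarith [real_inner_le_norm (f' (w + t • d) - f' w) d,
      mul_le_mul_of_nonneg_right hgrad (norm_nonneg d)]
  have h := hanti (by simp) (by simp) zero_le_one
  simp [φ, d] at h
  linarith

theorem implicit_step_inner_le {V : Type*} [NormedAddCommGroup V] [InnerProductSpace ℝ V]
    {a b c G : V} {γ β : ℝ} (hγ : 0 < γ) (hβ : 0 ≤ β)
    (h : γ • (a - b) = β • (c - a) - G) :
    ⟪G, b⟫ - β / 2 * ‖c‖ ^ 2 - ‖G‖ ^ 2 / (2 * γ) + (γ + β) / 2 * ‖a‖ ^ 2 ≤ γ / 2 * ‖b‖ ^ 2 := by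
  obtain rfl : G = β • (c - a) - γ • (a - b) := by rw [h]; abel
  have key : γ / 2 * ‖b‖ ^ 2 - (⟪β • (c - a) - γ • (a - b), b⟫ - β / 2 * ‖c‖ ^ 2
      - ‖β • (c - a) - γ • (a - b)‖ ^ 2 / (2 * γ) + (γ + β) / 2 * ‖a‖ ^ 2)
      = β * (γ + β) / (2 * γ) * ‖c - a‖ ^ 2 := by
    simp only [← real_inner_self_eq_norm_sq, inner_sub_left, inner_sub_right, real_inner_smul_left,
      real_inner_smul_right, real_inner_comm a b, real_inner_comm a c, real_inner_comm b c]
    field_simp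
    ring
  have : 0 ≤ β * (γ + β) / (2 * γ) * ‖c - a‖ ^ 2 := by positivity
  linarith

noncomputable def lyapunov {V : Type*} [NormedAddCommGroup V] [InnerProductSpace ℝ V]
    (f : V → ℝ) (xstar : V) (γ : ℝ) (x v : V) : ℝ :=
  f x - f xstar + γ / 2 * ‖v - xstar‖ ^ 2

section OneStep

variable {V : Type*} [NormedAddCommGroup V] [InnerProductSpace ℝ V]
  {μ L : ℝ} {f : V → ℝ} {f' : V → V}

theorem gradient_step_le (hL : 0 < L)
    (hsmooth : ∀ z w : V, f z ≤ f w + ⟪f' w, z - w⟫ + L / 2 * ‖z - w‖ ^ 2) (y : V) :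
    f (y - (1 / L) • f' y) ≤ f y - ‖f' y‖ ^ 2 / (2 * L) := by
  have h := hsmooth (y - (1 / L) • f' y) y
  rw [sub_sub_cancel_left, inner_neg_right, real_inner_smul_right, real_inner_self_eq_norm_sq,
    norm_neg, norm_smul, Real.norm_of_nonneg (by positivity)] at h
  convert h using 1
  field_simp
  ring

theorem lyapunov_succ_le (hμ : 0 ≤ μ) (hL : 0 < L)
    (hconv : ∀ z w : V, f z - f w - ⟪f' w, z - w⟫ ≥ μ / 2 * ‖z - w‖ ^ 2)
    (hsmooth : ∀ z w : V, f z ≤ f w + ⟪f' w, z - w⟫ + L / 2 * ‖z - w‖ ^ 2)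
    {xstar x y v v' : V} {γ γ' α : ℝ} (hγ : 0 < γ) (hα : 0 ≤ α)
    (hstep : L * α ^ 2 = γ * (1 + α))
    (hγrec : γ' = γ + α * (μ - γ'))
    (hyrec : y - x = α • (v - y))
    (hvrec : γ • (v' - v) = α • (μ • (y - v') - f' y)) :
    (1 + α) * lyapunov f xstar γ' (y - (1 / L) • f' y) v' ≤ lyapunov f xstar γ x v := by
  have hdesc : (1 + α) * f (y - (1 / L) • f' y) ≤ (1 + α) * f y - α ^ 2 / (2 * γ) * ‖f' y‖ ^ 2 := by
    refine (mul_le_mul_of_nonneg_left (gradient_step_le hL hsmooth y) (by positivity)).trans_eq ?_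
    field_simp
    linear_combination ‖f' y‖ ^ 2 * hstep
  have hstar : f y - f xstar ≤ ⟪f' y, y - xstar⟫ - μ / 2 * ‖y - xstar‖ ^ 2 := by
    have h := hconv xstar y
    rw [← neg_sub y xstar, inner_neg_right, norm_neg] at h
    linarith
  have hx : f y ≤ f x + α * ⟪f' y, v - y⟫ := by
    have h := hconv x y
    rw [show x - y = -(α • (v - y)) by rw [← hyrec]; abel, inner_neg_right,
      real_inner_smul_right] at h
    nlinarith [sq_nonneg ‖x - y‖]
  have hsplit : ⟪f' y, v - y⟫ = ⟪f' y, v - xstar⟫ - ⟪f' y, y - xstar⟫ := by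
    rw [← inner_sub_right, sub_sub_sub_cancel_right]
  have hdist := implicit_step_inner_le (a := v' - xstar) (b := v - xstar) (c := y - xstar)
    (G := α • f' y) hγ (mul_nonneg hα hμ) (by
      rw [sub_sub_sub_cancel_right, sub_sub_sub_cancel_right, hvrec]; module)
  rw [real_inner_smul_left, norm_smul, Real.norm_of_nonneg hα] at hdist
  unfold lyapunov
  linear_combination hdesc + α * hstar + hx + α * hsplit + hdist + (‖v' - xstar‖ ^ 2 / 2) * hγrec

theorem lyapunov_le_mul_inv_prod (hμ : 0 ≤ μ) (hL : 0 < L)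
    (hconv : ∀ z w : V, f z - f w - ⟪f' w, z - w⟫ ≥ μ / 2 * ‖z - w‖ ^ 2)
    (hsmooth : ∀ z w : V, f z ≤ f w + ⟪f' w, z - w⟫ + L / 2 * ‖z - w‖ ^ 2)
    (xstar : V) {γ α : ℕ → ℝ} {x y v : ℕ → V} (hγ0 : 0 < γ 0) (hα : ∀ k, 0 ≤ α k)
    (hstep : ∀ k, L * α k ^ 2 = γ k * (1 + α k))
    (hγrec : ∀ k, γ (k + 1) = γ k + α k * (μ - γ (k + 1)))
    (hyrec : ∀ k, y k - x k = α k • (v k - y k))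
    (hvrec : ∀ k, γ k • (v (k + 1) - v k) = α k • (μ • (y k - v (k + 1)) - f' (y k)))
    (hxrec : ∀ k, x (k + 1) = y k - (1 / L) • f' (y k)) (k : ℕ) :
    lyapunov f xstar (γ k) (x k) (v k) ≤
      lyapunov f xstar (γ 0) (x 0) (v 0) * (∏ i ∈ range k, (1 + α i))⁻¹ := by
  have hP : ∀ k, 0 < ∏ i ∈ range k, (1 + α i) := fun k ↦ prod_pos fun i _ ↦ by linarith [hα i]
  have hγ : ∀ k, 0 < γ k := fun k ↦
    pos_of_mul_pos_left (hγ0.trans_le (gamma_zero_le_mul_prod hμ hα hγrec k)) (hP k).le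
  rw [le_mul_inv_iff₀ (hP k)]
  refine mul_prod_le_of_mul_succ_le (u := fun k ↦ lyapunov f xstar (γ k) (x k) (v k))
    (r := fun i ↦ 1 + α i) (fun i ↦ by linarith [hα i]) (fun i ↦ ?_) k
  rw [hxrec]
  exact lyapunov_succ_le hμ hL hconv hsmooth (hγ i) (hα i) (hstep i) (hγrec i) (hyrec i) (hvrec i)

end OneStep

theorem stmt9 {V : Type*} [NormedAddCommGroup V] [InnerProductSpace ℝ V] [CompleteSpace V]
    (μ L : ℝ) (hμ : 0 ≤ μ) (hμL : μ ≤ L) (hL : 0 < L) (f : V → ℝ) (f' : V → V)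
    (hdiff : ∀ z, HasGradientAt f (f' z) z)
    (hconv : ∀ z w : V, f z - f w - ⟪f' w, z - w⟫ ≥ μ / 2 * ‖z - w‖ ^ 2)
    (hlip : ∀ z w : V, ‖f' z - f' w‖ ≤ L * ‖z - w‖)
    (xstar : V) (hmin : ∀ z, f xstar ≤ f z)
    (γ α : ℕ → ℝ) (hγ0 : 0 < γ 0) (hα : ∀ k, 0 < α k)
    (hstep : ∀ k, L * (α k) ^ 2 = γ k * (1 + α k))
    (x y v : ℕ → V)
    (hγrec : ∀ k, γ (k + 1) = γ k + α k * (μ - γ (k + 1)))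
    (hyrec : ∀ k, y k - x k = α k • (v k - y k))
    (hvrec : ∀ k, γ k • (v (k + 1) - v k) = α k • (μ • (y k - v (k + 1)) - f' (y k)))
    (hxrec : ∀ k, x (k + 1) = y k - (1 / L) • f' (y k)) :
    (∀ k : ℕ,
      f (x k) - f xstar + γ k / 2 * ‖v k - xstar‖ ^ 2 ≤
        (f (x 0) - f xstar + γ 0 / 2 * ‖v 0 - xstar‖ ^ 2) *
          min (4 * L / (Real.sqrt (γ 0) * k + 2 * Real.sqrt L) ^ 2)
            (((1 + Real.sqrt (min (γ 0) μ / L)) ^ k)⁻¹)) ∧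
    (γ 0 ≥ L → ∀ k : ℕ, 1 ≤ k →
      f (x k) - f xstar + γ k / 2 * ‖v k - xstar‖ ^ 2 ≤
        (f (x 0) - f xstar + L / 2 * ‖v 0 - xstar‖ ^ 2) *
          min (4 / (k : ℝ) ^ 2) (((1 + Real.sqrt (μ / L)) ^ (k - 1))⁻¹)) := by
  have hα₀ : ∀ k, 0 ≤ α k := fun k ↦ (hα k).le
  have hdecay := lyapunov_le_mul_inv_prod hμ hL hconv
    (le_add_inner_add_sq_of_lipschitz_gradient hdiff hlip) xstar hγ0 hα₀ hstep hγrec hyrec hvrec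
    hxrec
  have hgap : 0 ≤ f (x 0) - f xstar := sub_nonneg.2 (hmin _)
  refine ⟨fun k ↦ (hdecay k).trans ?_, fun hγL k hk ↦ (hdecay k).trans ?_⟩
  · exact mul_le_mul_of_nonneg_left (inv_prod_le_min hμ hL hγ0.le hα₀ hstep hγrec k)
      (by unfold lyapunov; positivity)
  · have hγM := gamma_zero_mul_inv_prod_le_min hμ hμL hL hγL hα₀ hstep hγrec hk
    set M := min (4 / (k : ℝ) ^ 2) (((1 + √(μ / L)) ^ (k - 1))⁻¹)
    have hP : 0 < ∏ i ∈ range k, (1 + α i) := prod_pos fun i _ ↦ by linarith [hα i]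
    have hM : (∏ i ∈ range k, (1 + α i))⁻¹ ≤ M :=
      le_of_mul_le_mul_left (by nlinarith [inv_pos.2 hP]) hL
    unfold lyapunov
    calc (f (x 0) - f xstar + γ 0 / 2 * ‖v 0 - xstar‖ ^ 2) * (∏ i ∈ range k, (1 + α i))⁻¹
        = (f (x 0) - f xstar) * (∏ i ∈ range k, (1 + α i))⁻¹
          + γ 0 * (∏ i ∈ range k, (1 + α i))⁻¹ / 2 * ‖v 0 - xstar‖ ^ 2 := by ring
      _ ≤ (f (x 0) - f xstar) * M + L * M / 2 * ‖v 0 - xstar‖ ^ 2 := by gcongr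
      _ = (f (x 0) - f xstar + L / 2 * ‖v 0 - xstar‖ ^ 2) * M := by ring
end
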